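/- Let Σ = (X, Y, M(U), φ, h) be a linear control system with U ≠ {0} that is exponentially stable, robust with respect to the input, and strictly causal. Then the minimum IOS-gain γ, the minimum output asymptotic gain γ_as, and the supremum over T > 0 of the optimal value V(T) := sup{ ‖h(φ(T,0,u))‖_Y : u ∈ M(U), sup_{0≤t≤T}‖u(t)‖_U = 1 } all coincide: γ = γ_as = sup_{T>0} V(T). -/

import Mathlib

open Filter

noncomputable section

/-- A linear control system `Σ = (X, Y, M(U), φ, h)` in the sense of
Karafyllis, "On the Relation of IOS-Gains and Asymptotic Gains For Linear Systems".
Inputs are functions `u : ℝ → U`; only values on `[0, ∞)` are relevant. -/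
structure LinearControlSystem (X Y U : Type*)
    [NormedAddCommGroup X] [NormedSpace ℝ X]
    [NormedAddCommGroup Y] [NormedSpace ℝ Y]
    [NormedAddCommGroup U] [NormedSpace ℝ U] where
  /-- the set `M(U)` of admissible inputs -/
  inputs : Set (ℝ → U)
  /-- the transition map `φ` -/
  trans : ℝ → X → (ℝ → U) → X
  /-- the continuous linear output map `h : X → Y` -/
  out : X →L[ℝ] Y
  /-- `U ≠ {0}` -/
  U_nontrivial : ∃ v : U, v ≠ 0
  /-- inputs are locally bounded -/
  loc_bdd : ∀ u ∈ inputs, ∀ T : ℝ, BddAbove ((fun s => ‖u s‖) '' Set.Icc 0 T)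
  zero_mem : (0 : ℝ → U) ∈ inputs
  add_mem : ∀ u₁ ∈ inputs, ∀ u₂ ∈ inputs, u₁ + u₂ ∈ inputs
  smul_mem : ∀ u ∈ inputs, ∀ c : ℝ, c • u ∈ inputs
  concat_le_mem : ∀ u₁ ∈ inputs, ∀ u₂ ∈ inputs, ∀ τ > (0 : ℝ),
    (fun t => if t ≤ τ then u₁ t else u₂ (t - τ)) ∈ inputs
  concat_lt_mem : ∀ u₁ ∈ inputs, ∀ u₂ ∈ inputs, ∀ τ > (0 : ℝ),
    (fun t => if t < τ then u₁ t else u₂ (t - τ)) ∈ inputs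
  /-- closure under the shift operator `δ_τ` -/
  shift_mem : ∀ u ∈ inputs, ∀ τ > (0 : ℝ), (fun t => u (t + τ)) ∈ inputs
  exists_input_val : ∀ v : U, ∃ u ∈ inputs, u 0 = v
  /-- closure under `T`-periodic extension -/
  periodic_ext_mem : ∀ u ∈ inputs, ∀ T > (0 : ℝ),
    (fun t => u (t - T * ⌊t / T⌋)) ∈ inputs
  identity : ∀ x : X, ∀ u ∈ inputs, trans 0 x u = x
  causality : ∀ t ≥ (0 : ℝ), ∀ x : X, ∀ u ∈ inputs, ∀ v ∈ inputs,
    (∀ s, 0 ≤ s → s ≤ t → u s = v s) → trans t x u = trans t x v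
  semigroup : ∀ x : X, ∀ u ∈ inputs, ∀ τ t : ℝ, 0 ≤ τ → τ ≤ t →
    trans t x u = trans (t - τ) (trans τ x u) (fun s => u (s + τ))
  linearity : ∀ t ≥ (0 : ℝ), ∀ x₁ x₂ : X, ∀ u₁ ∈ inputs, ∀ u₂ ∈ inputs, ∀ a b : ℝ,
    trans t (a • x₁ + b • x₂) (a • u₁ + b • u₂) = a • trans t x₁ u₁ + b • trans t x₂ u₂

namespace LinearControlSystem

variable {X Y U : Type*}
    [NormedAddCommGroup X] [NormedSpace ℝ X]
    [NormedAddCommGroup Y] [NormedSpace ℝ Y]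
    [NormedAddCommGroup U] [NormedSpace ℝ U]

/-- `sup_{0 ≤ s ≤ t} ‖u(s)‖`. -/
def runSup (u : ℝ → U) (t : ℝ) : ℝ :=
  sSup ((fun s => ‖u s‖) '' Set.Icc 0 t)

/-- `sup_{s ≥ 0} ‖u(s)‖`. -/
def supNorm (u : ℝ → U) : ℝ :=
  sSup ((fun s => ‖u s‖) '' Set.Ici 0)

/-- exponential stability with the specific constants `M, σ > 0` -/
def IsES (sys : LinearControlSystem X Y U) (M σ : ℝ) : Prop :=
  0 < M ∧ 0 < σ ∧ ∀ x : X, ∀ t ≥ (0 : ℝ),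
    ‖sys.trans t x 0‖ ≤ M * Real.exp (-σ * t) * ‖x‖

/-- exponential stability (ES) -/
def ES (sys : LinearControlSystem X Y U) : Prop :=
  ∃ M σ : ℝ, sys.IsES M σ

/-- robustness with respect to the input, with the specific nondecreasing function `b` -/
def IsRobust (sys : LinearControlSystem X Y U) (b : ℝ → ℝ) : Prop :=
  MonotoneOn b (Set.Ici 0) ∧ (∀ t, 0 ≤ b t) ∧
    ∀ u ∈ sys.inputs, ∀ t ≥ (0 : ℝ), ‖sys.trans t 0 u‖ ≤ b t * runSup u t

/-- robustness with respect to the input -/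
def Robust (sys : LinearControlSystem X Y U) : Prop :=
  ∃ b : ℝ → ℝ, sys.IsRobust b

/-- strict causality -/
def StrictlyCausal (sys : LinearControlSystem X Y U) : Prop :=
  ∀ t > (0 : ℝ), ∀ u ∈ sys.inputs, ∀ v ∈ sys.inputs,
    (∀ s, 0 ≤ s → s < t → u s = v s) → sys.trans t 0 u = sys.trans t 0 v

/-- the minimum IOS-gain `γ` -/
def gain (sys : LinearControlSystem X Y U) : ℝ :=
  sSup {r | ∃ t ≥ (0 : ℝ), ∃ u ∈ sys.inputs, runSup u t = 1 ∧ r = ‖sys.out (sys.trans t 0 u)‖}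

/-- the minimum output asymptotic gain `γ_as` -/
def asympGain (sys : LinearControlSystem X Y U) : ℝ :=
  sSup {r | ∃ u ∈ sys.inputs, supNorm u = 1 ∧
    r = limsup (fun t => ‖sys.out (sys.trans t 0 u)‖) atTop}

/-- the value `V(T)` of the optimal control problem (4.5) -/
def V (sys : LinearControlSystem X Y U) (T : ℝ) : ℝ :=
  sSup {r | ∃ u ∈ sys.inputs, runSup u T = 1 ∧ r = ‖sys.out (sys.trans T 0 u)‖}

/-- periodic inputs -/
def Periodic (u : ℝ → U) : Prop :=
  ∃ T > (0 : ℝ), ∀ t ≥ (0 : ℝ), u (t + T) = u t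

end LinearControlSystem

/-!
Exponential stability and robustness give a uniform estimate `‖φ(t,0,u)‖ ≤ C sup_{[0,t]} ‖u‖`:
on a last interval of fixed length `L` the free motion contracts by `1/2` and the input adds at
most `b(L) sup ‖u‖`, so `C = 2 b(L)` propagates by induction over `[0, nL]`. Hence all the suprema
are finite and, by homogeneity, `‖h(φ(t,0,u))‖ ≤ γ sup_{[0,t]} ‖u‖`, which gives `γ_as ≤ γ` and
`γ = sup_{T>0} V(T)`.

For `γ ≤ γ_as`, take `u` with `sup_{[0,T]} ‖u‖ = 1`, delay it by `S`, cut it off after `S + T` and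
extend it periodically. By strict causality the state is still `0` at time `S`, so it equals
`φ(T,0,u)` at time `S + T`; at the times `kP + S + T` it differs from this by a free motion that has
decayed for time `S + T`, so the limsup of the output is at least `‖h(φ(T,0,u))‖ - O(e^{-σS})`.
-/

open Real Topology in
theorem tendsto_mul_exp_neg_mul_atTop_nhds_zero (M : ℝ) {σ : ℝ} (hσ : 0 < σ) :
    Tendsto (fun t => M * exp (-σ * t)) atTop (𝓝 0) := by
  have h := (tendsto_exp_neg_atTop_nhds_zero.comp (tendsto_id.const_mul_atTop hσ)).const_mul M
  simpa only [mul_zero, Function.comp_def, id, neg_mul] using h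

namespace LinearControlSystem

open Set Real Pointwise Topology

section RunSup

variable {U : Type*} [NormedAddCommGroup U]

theorem runSup_nonneg (u : ℝ → U) (t : ℝ) : 0 ≤ runSup u t :=
  Real.sSup_nonneg <| by rintro _ ⟨s, -, rfl⟩; exact norm_nonneg _

variable {u : ℝ → U} {s t : ℝ}

theorem runSup_le {a : ℝ} (ha : 0 ≤ a) (h : ∀ s ∈ Icc 0 t, ‖u s‖ ≤ a) :
    runSup u t ≤ a :=
  Real.sSup_le (by rintro _ ⟨s, hs, rfl⟩; exact h s hs) ha

theorem norm_le_runSup (hu : BddAbove ((fun s => ‖u s‖) '' Icc 0 t))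
    (hs : s ∈ Icc 0 t) : ‖u s‖ ≤ runSup u t :=
  le_csSup hu ⟨s, hs, rfl⟩

theorem runSup_le_supNorm (hu : BddAbove ((fun s => ‖u s‖) '' Ici 0))
    (ht : 0 ≤ t) : runSup u t ≤ supNorm u :=
  csSup_le_csSup hu ⟨_, 0, ⟨le_rfl, ht⟩, rfl⟩ (image_mono Icc_subset_Ici_self)

theorem runSup_smul [NormedSpace ℝ U] (c : ℝ) (u : ℝ → U) (t : ℝ) :
    runSup (c • u) t = ‖c‖ * runSup u t := by
  have himage : (fun s => ‖(c • u) s‖) '' Icc 0 t = ‖c‖ • (fun s => ‖u s‖) '' Icc 0 t := by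
    simp only [Pi.smul_apply, norm_smul, ← Set.image_smul, Set.image_image, smul_eq_mul]
  rw [runSup, himage, Real.sSup_smul_of_nonneg (norm_nonneg c), smul_eq_mul, runSup]

end RunSup

section PeriodicPad

variable {U : Type*}

def periodicExt (w : ℝ → U) (P : ℝ) : ℝ → U := fun t => w (t - P * ⌊t / P⌋)

theorem periodicExt_apply_of_mem_Ico (w : ℝ → U) {P t : ℝ} (ht : t ∈ Ico 0 P) :
    periodicExt w P t = w t := by
  have hP : 0 < P := ht.1.trans_lt ht.2
  have hfloor : ⌊t / P⌋ = 0 :=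
    Int.floor_eq_zero_iff.2 ⟨div_nonneg ht.1 hP.le, (div_lt_one hP).2 ht.2⟩
  simp [periodicExt, hfloor]

theorem periodic_periodicExt (w : ℝ → U) {P : ℝ} (hP : P ≠ 0) :
    Function.Periodic (periodicExt w P) P := fun t => by
  have hdiv : (t + P) / P = t / P + 1 := by field_simp
  simp only [periodicExt, hdiv, Int.floor_add_one, Int.cast_add, Int.cast_one]
  ring_nf

variable [Zero U]

-- The extra unit of period keeps all of `u|[0, T]`, endpoint included, inside one period.
def periodicPad (u : ℝ → U) (S T : ℝ) : ℝ → U :=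
  periodicExt (fun t => if t ≤ S + T then (if t < S then 0 else u (t - S)) else 0) (S + T + 1)

variable {S T : ℝ}

theorem periodic_periodicPad (u : ℝ → U) (hS : 0 ≤ S) (hT : 0 ≤ T) :
    Function.Periodic (periodicPad u S T) (S + T + 1) :=
  periodic_periodicExt _ (by linarith)

theorem periodicPad_eq_zero_of_mem_Ico (u : ℝ → U) (hT : 0 ≤ T) {s : ℝ} (hs : s ∈ Ico 0 S) :
    periodicPad u S T s = 0 := by
  rw [periodicPad, periodicExt_apply_of_mem_Ico _ ⟨hs.1, by linarith [hs.2]⟩,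
    if_pos (by linarith [hs.2]), if_pos hs.2]

theorem periodicPad_add_delay (u : ℝ → U) (hS : 0 ≤ S) {s : ℝ} (hs : s ∈ Icc 0 T) :
    periodicPad u S T (s + S) = u s := by
  rw [periodicPad, periodicExt_apply_of_mem_Ico _ ⟨by linarith [hs.1], by linarith [hs.2]⟩,
    if_pos (by linarith [hs.2]), if_neg (by linarith [hs.1]), add_sub_cancel_right]

end PeriodicPad

section PeriodicPadNorm

variable {U : Type*} [NormedAddCommGroup U] {S T : ℝ} {u : ℝ → U}

theorem norm_periodicPad_le (hu : BddAbove ((fun s => ‖u s‖) '' Icc 0 T)) (t : ℝ) :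
    ‖periodicPad u S T t‖ ≤ runSup u T := by
  simp only [periodicPad, periodicExt]
  split_ifs with h₁ h₂
  · simpa using runSup_nonneg u T
  · exact norm_le_runSup hu ⟨by linarith [not_lt.1 h₂], by linarith⟩
  · simpa using runSup_nonneg u T

theorem supNorm_periodicPad (hu : BddAbove ((fun s => ‖u s‖) '' Icc 0 T)) (hS : 0 ≤ S)
    (hT : 0 ≤ T) : supNorm (periodicPad u S T) = runSup u T := by
  have hle : ∀ r ∈ (fun s => ‖periodicPad u S T s‖) '' Ici 0, r ≤ runSup u T := by
    rintro _ ⟨s, -, rfl⟩; exact norm_periodicPad_le hu s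
  refine le_antisymm (Real.sSup_le hle (runSup_nonneg u T)) ?_
  refine csSup_le ⟨_, 0, ⟨le_rfl, hT⟩, rfl⟩ ?_
  rintro _ ⟨s, hs, rfl⟩
  show ‖u s‖ ≤ _
  rw [← periodicPad_add_delay u hS hs]
  exact le_csSup ⟨_, hle⟩ ⟨s + S, mem_Ici.2 (by linarith [hs.1]), rfl⟩

end PeriodicPadNorm

variable {X Y U : Type*}
    [NormedAddCommGroup X] [NormedSpace ℝ X]
    [NormedAddCommGroup Y] [NormedSpace ℝ Y]
    [NormedAddCommGroup U] [NormedSpace ℝ U]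
    (sys : LinearControlSystem X Y U)
    {u : ℝ → U} {s t τ S T : ℝ}

theorem norm_le_runSup_of_mem (hu : u ∈ sys.inputs) (hs : s ∈ Icc 0 t) :
    ‖u s‖ ≤ runSup u t :=
  norm_le_runSup (sys.loc_bdd u hu t) hs

theorem runSup_mono (hu : u ∈ sys.inputs) (hst : s ≤ t) :
    runSup u s ≤ runSup u t :=
  runSup_le (runSup_nonneg u t) fun _ hr => sys.norm_le_runSup_of_mem hu ⟨hr.1, hr.2.trans hst⟩

theorem exists_mem_runSup_eq_one (hT : 0 ≤ T) : ∃ u ∈ sys.inputs, runSup u T = 1 := by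
  obtain ⟨v, hv⟩ := sys.U_nontrivial
  obtain ⟨u, hu, hu0⟩ := sys.exists_input_val v
  have hpos : 0 < runSup u T :=
    (norm_pos_iff.2 hv).trans_le (hu0 ▸ sys.norm_le_runSup_of_mem hu ⟨le_rfl, hT⟩)
  refine ⟨(runSup u T)⁻¹ • u, sys.smul_mem u hu _, ?_⟩
  rw [runSup_smul, norm_inv, Real.norm_of_nonneg hpos.le, inv_mul_cancel₀ hpos.ne']

theorem shift_mem_of_nonneg (hu : u ∈ sys.inputs) (hτ : 0 ≤ τ) :
    (fun t => u (t + τ)) ∈ sys.inputs := by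
  rcases hτ.eq_or_lt with rfl | hτ
  · simpa using hu
  · exact sys.shift_mem u hu τ hτ

theorem trans_zero_smul (ht : 0 ≤ t) (hu : u ∈ sys.inputs) (c : ℝ) :
    sys.trans t 0 (c • u) = c • sys.trans t 0 u := by
  simpa using sys.linearity t ht 0 0 u hu 0 sys.zero_mem c 0

theorem trans_zero_zero (ht : 0 ≤ t) : sys.trans t 0 0 = 0 := by
  simpa using sys.trans_zero_smul ht sys.zero_mem 0

theorem trans_eq_trans_zero_add (ht : 0 ≤ t) (x : X) (hu : u ∈ sys.inputs) :
    sys.trans t x u = sys.trans t x 0 + sys.trans t 0 u := by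
  simpa using sys.linearity t ht x 0 0 sys.zero_mem u hu 1 1

theorem trans_add (hτ : 0 ≤ τ) (ht : 0 ≤ t) (hu : u ∈ sys.inputs) :
    sys.trans (τ + t) 0 u =
      sys.trans t (sys.trans τ 0 u) 0 + sys.trans t 0 (fun s => u (s + τ)) := by
  rw [sys.semigroup 0 u hu τ (τ + t) hτ (by linarith), add_sub_cancel_left,
    sys.trans_eq_trans_zero_add ht _ (sys.shift_mem_of_nonneg hu hτ)]

theorem trans_zero_of_eqOn_zero (ht : 0 ≤ t) (hu : u ∈ sys.inputs) (h : EqOn u 0 (Icc 0 t)) :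
    sys.trans t 0 u = 0 := by
  rw [sys.causality t ht 0 u hu 0 sys.zero_mem fun s hs hst => h ⟨hs, hst⟩,
    sys.trans_zero_zero ht]

def HasStateGain (C : ℝ) : Prop :=
  ∀ u ∈ sys.inputs, ∀ t, 0 ≤ t → ‖sys.trans t 0 u‖ ≤ C * runSup u t

theorem gain_nonneg : 0 ≤ sys.gain :=
  Real.sSup_nonneg <| by rintro _ ⟨t, -, u, -, -, rfl⟩; exact norm_nonneg _

theorem V_nonneg (T : ℝ) : 0 ≤ sys.V T :=
  Real.sSup_nonneg <| by rintro _ ⟨u, -, -, rfl⟩; exact norm_nonneg _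

theorem gain_le {a : ℝ}
    (h : ∀ t ≥ (0 : ℝ), ∀ u ∈ sys.inputs, runSup u t = 1 → ‖sys.out (sys.trans t 0 u)‖ ≤ a) :
    sys.gain ≤ a :=
  have ⟨u, hu, h1⟩ := sys.exists_mem_runSup_eq_one le_rfl
  csSup_le ⟨_, 0, le_rfl, u, hu, h1, rfl⟩ <| by
    rintro _ ⟨t, ht, u, hu, h1, rfl⟩; exact h t ht u hu h1

theorem V_le {a : ℝ} (hT : 0 ≤ T)
    (h : ∀ u ∈ sys.inputs, runSup u T = 1 → ‖sys.out (sys.trans T 0 u)‖ ≤ a) : sys.V T ≤ a :=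
  have ⟨u, hu, h1⟩ := sys.exists_mem_runSup_eq_one hT
  csSup_le ⟨_, u, hu, h1, rfl⟩ <| by rintro _ ⟨u, hu, h1, rfl⟩; exact h u hu h1

variable {sys}

theorem StrictlyCausal.trans_zero_of_eqOn_zero (hsc : sys.StrictlyCausal) (ht : 0 < t)
    (hu : u ∈ sys.inputs) (h : EqOn u 0 (Ico 0 t)) : sys.trans t 0 u = 0 := by
  rw [hsc t ht u hu 0 sys.zero_mem fun s hs hst => h ⟨hs, hst⟩, sys.trans_zero_zero ht.le]

theorem IsRobust.norm_trans_add_le {b : ℝ → ℝ} (hrob : sys.IsRobust b) {q L : ℝ}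
    (hL : 0 ≤ L) (hτ : 0 ≤ τ) (hq : ∀ x, ‖sys.trans L x 0‖ ≤ q * ‖x‖)
    (hu : u ∈ sys.inputs) :
    ‖sys.trans (τ + L) 0 u‖ ≤ q * ‖sys.trans τ 0 u‖ + b L * runSup u (τ + L) := by
  have hshift : runSup (fun s => u (s + τ)) L ≤ runSup u (τ + L) :=
    runSup_le (runSup_nonneg u _) fun s hs =>
      sys.norm_le_runSup_of_mem hu ⟨by linarith [hs.1], by linarith [hs.2]⟩
  calc ‖sys.trans (τ + L) 0 u‖
      ≤ ‖sys.trans L (sys.trans τ 0 u) 0‖ + ‖sys.trans L 0 (fun s => u (s + τ))‖ := by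
        rw [sys.trans_add hτ hL hu]; exact norm_add_le _ _
    _ ≤ q * ‖sys.trans τ 0 u‖ + b L * runSup u (τ + L) := by
        gcongr
        · exact hq _
        · calc _ ≤ b L * runSup (fun s => u (s + τ)) L :=
                hrob.2.2 _ (sys.shift_mem_of_nonneg hu hτ) L hL
            _ ≤ b L * runSup u (τ + L) := mul_le_mul_of_nonneg_left hshift (hrob.2.1 L)

theorem IsES.hasStateGain {M σ : ℝ} {b : ℝ → ℝ} (hES : sys.IsES M σ) (hrob : sys.IsRobust b) :
    ∃ C, 0 ≤ C ∧ sys.HasStateGain C := by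
  obtain ⟨-, hσ, hdecay⟩ := hES
  obtain ⟨L, hLd, hL1⟩ := (((tendsto_mul_exp_neg_mul_atTop_nhds_zero M hσ).eventually
    (eventually_le_nhds (by norm_num : (0 : ℝ) < 1 / 2))).and (eventually_ge_atTop 1)).exists
  have hL : 0 < L := by linarith
  have hbL := hrob.2.1 L
  have hq : ∀ x, ‖sys.trans L x 0‖ ≤ 1 / 2 * ‖x‖ := fun x =>
    (hdecay x L hL.le).trans (mul_le_mul_of_nonneg_right hLd (norm_nonneg x))
  have hshort : ∀ u ∈ sys.inputs, ∀ t ∈ Icc 0 L, ‖sys.trans t 0 u‖ ≤ 2 * b L * runSup u t :=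
    fun u hu t ht => calc
      ‖sys.trans t 0 u‖ ≤ b t * runSup u t := hrob.2.2 u hu t ht.1
      _ ≤ 2 * b L * runSup u t := by
        gcongr
        · exact runSup_nonneg u t
        · linarith [hrob.1 ht.1 hL.le ht.2]
  have hlong : ∀ n : ℕ, ∀ u ∈ sys.inputs, ∀ t ∈ Icc 0 (L + n * L),
      ‖sys.trans t 0 u‖ ≤ 2 * b L * runSup u t := by
    intro n
    induction n with
    | zero => simpa using hshort
    | succ n ih =>
      intro u hu t ht
      rcases le_or_gt t L with htL | htL
      · exact hshort u hu t ⟨ht.1, htL⟩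
      obtain ⟨τ, rfl⟩ : ∃ τ, t = τ + L := ⟨t - L, by ring⟩
      have hτ : τ ∈ Icc 0 (L + n * L) := ⟨by linarith, by push_cast at ht; linarith [ht.2]⟩
      calc ‖sys.trans (τ + L) 0 u‖ ≤ 1 / 2 * ‖sys.trans τ 0 u‖ + b L * runSup u (τ + L) :=
            hrob.norm_trans_add_le hL.le hτ.1 hq hu
        _ ≤ 1 / 2 * (2 * b L * runSup u (τ + L)) + b L * runSup u (τ + L) := by
            gcongr
            exact (ih u hu τ hτ).trans
              (mul_le_mul_of_nonneg_left (sys.runSup_mono hu (by linarith)) (by positivity))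
        _ = 2 * b L * runSup u (τ + L) := by ring
  refine ⟨2 * b L, by positivity, fun u hu t ht => hlong ⌈t / L⌉₊ u hu t ⟨ht, ?_⟩⟩
  have := (div_le_iff₀ hL).1 (Nat.le_ceil (t / L))
  linarith

namespace HasStateGain

variable {C : ℝ}

theorem norm_out_trans_le (hC : sys.HasStateGain C) (ht : 0 ≤ t) (hu : u ∈ sys.inputs) :
    ‖sys.out (sys.trans t 0 u)‖ ≤ ‖sys.out‖ * (C * runSup u t) :=
  (sys.out.le_opNorm _).trans (mul_le_mul_of_nonneg_left (hC u hu t ht) (norm_nonneg _))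

theorem norm_out_le_gain (hC : sys.HasStateGain C) (ht : 0 ≤ t)
    (hu : u ∈ sys.inputs) (h1 : runSup u t = 1) : ‖sys.out (sys.trans t 0 u)‖ ≤ sys.gain := by
  refine le_csSup ⟨‖sys.out‖ * C, ?_⟩ ⟨t, ht, u, hu, h1, rfl⟩
  rintro _ ⟨t, ht, u, hu, h1, rfl⟩
  simpa [h1] using hC.norm_out_trans_le ht hu

theorem norm_out_le_V (hC : sys.HasStateGain C) (hT : 0 ≤ T)
    (hu : u ∈ sys.inputs) (h1 : runSup u T = 1) : ‖sys.out (sys.trans T 0 u)‖ ≤ sys.V T := by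
  refine le_csSup ⟨‖sys.out‖ * C, ?_⟩ ⟨u, hu, h1, rfl⟩
  rintro _ ⟨u, hu, h1, rfl⟩
  simpa [h1] using hC.norm_out_trans_le hT hu

theorem norm_out_le_gain_mul (hC : sys.HasStateGain C) (ht : 0 ≤ t)
    (hu : u ∈ sys.inputs) : ‖sys.out (sys.trans t 0 u)‖ ≤ sys.gain * runSup u t := by
  rcases (runSup_nonneg u t).eq_or_lt with h0 | hpos
  · have hzero : EqOn u 0 (Icc 0 t) := fun s hs =>
      norm_le_zero_iff.1 (h0 ▸ sys.norm_le_runSup_of_mem hu hs)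
    simp [sys.trans_zero_of_eqOn_zero ht hu hzero, ← h0]
  · set ρ := runSup u t
    have hnorm : runSup (ρ⁻¹ • u) t = 1 := by
      rw [runSup_smul, norm_inv, Real.norm_of_nonneg hpos.le, inv_mul_cancel₀ hpos.ne']
    have hscale : sys.trans t 0 u = ρ • sys.trans t 0 (ρ⁻¹ • u) := by
      rw [sys.trans_zero_smul ht hu, smul_smul, mul_inv_cancel₀ hpos.ne', one_smul]
    rw [hscale, map_smul, norm_smul, Real.norm_of_nonneg hpos.le, mul_comm]
    exact mul_le_mul_of_nonneg_right
      (hC.norm_out_le_gain ht (sys.smul_mem u hu _) hnorm) hpos.le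

theorem limsup_le_gain (hC : sys.HasStateGain C) (hu : u ∈ sys.inputs)
    (h1 : supNorm u = 1) : limsup (fun t => ‖sys.out (sys.trans t 0 u)‖) atTop ≤ sys.gain := by
  have hbdd : BddAbove ((fun s => ‖u s‖) '' Ici 0) := by
    by_contra hnot
    simp [supNorm, Real.sSup_of_not_bddAbove hnot] at h1
  refine limsup_le_of_le (isCoboundedUnder_le_of_le atTop fun _ => norm_nonneg _) ?_
  filter_upwards [eventually_ge_atTop 0] with t ht
  calc ‖sys.out (sys.trans t 0 u)‖ ≤ sys.gain * runSup u t := hC.norm_out_le_gain_mul ht hu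
    _ ≤ sys.gain * 1 := by
        gcongr
        · exact sys.gain_nonneg
        · exact h1 ▸ runSup_le_supNorm hbdd ht
    _ = sys.gain := mul_one _

theorem asympGain_le_gain (hC : sys.HasStateGain C) : sys.asympGain ≤ sys.gain :=
  Real.sSup_le (by rintro _ ⟨u, hu, h1, rfl⟩; exact hC.limsup_le_gain hu h1) sys.gain_nonneg

theorem limsup_le_asympGain (hC : sys.HasStateGain C) (hu : u ∈ sys.inputs)
    (h1 : supNorm u = 1) :
    limsup (fun t => ‖sys.out (sys.trans t 0 u)‖) atTop ≤ sys.asympGain := by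
  refine le_csSup ⟨sys.gain, ?_⟩ ⟨u, hu, h1, rfl⟩
  rintro _ ⟨u, hu, h1, rfl⟩
  exact hC.limsup_le_gain hu h1

end HasStateGain

theorem periodicPad_mem (hu : u ∈ sys.inputs) (hS : 0 < S) (hT : 0 ≤ T) :
    periodicPad u S T ∈ sys.inputs :=
  sys.periodic_ext_mem _ (sys.concat_le_mem _ (sys.concat_lt_mem 0 sys.zero_mem u hu S hS) 0
    sys.zero_mem (S + T) (by linarith)) _ (by linarith)

theorem StrictlyCausal.trans_periodicPad (hsc : sys.StrictlyCausal) (hu : u ∈ sys.inputs)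
    (hS : 0 < S) (hT : 0 ≤ T) : sys.trans (S + T) 0 (periodicPad u S T) = sys.trans T 0 u := by
  have hmem := periodicPad_mem hu hS hT
  rw [sys.trans_add hS.le hT hmem,
    hsc.trans_zero_of_eqOn_zero hS hmem fun s hs => periodicPad_eq_zero_of_mem_Ico u hT hs,
    sys.trans_zero_zero hT, zero_add]
  exact sys.causality T hT 0 _ (sys.shift_mem_of_nonneg hmem hS.le) u hu
    fun s hs hsT => periodicPad_add_delay u hS.le ⟨hs, hsT⟩

theorem IsES.norm_out_sub_le_limsup {M σ C : ℝ} (hES : sys.IsES M σ) (hC : sys.HasStateGain C)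
    (hC0 : 0 ≤ C) {w : ℝ → U} (hw : w ∈ sys.inputs) (hw1 : ∀ s, ‖w s‖ ≤ 1) {P : ℝ} (hP : 0 < P)
    (hper : Function.Periodic w P) (ht : 0 ≤ t) :
    ‖sys.out (sys.trans t 0 w)‖ - ‖sys.out‖ * (M * exp (-σ * t) * C) ≤
      limsup (fun t => ‖sys.out (sys.trans t 0 w)‖) atTop := by
  have hrun : ∀ s, C * runSup w s ≤ C := fun s =>
    mul_le_of_le_one_right hC0 (runSup_le zero_le_one fun r _ => hw1 r)
  have hsample : ∀ k : ℕ, ‖sys.out (sys.trans t 0 w)‖ - ‖sys.out‖ * (M * exp (-σ * t) * C) ≤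
      ‖sys.out (sys.trans (k * P + t) 0 w)‖ := by
    intro k
    have hkP : 0 ≤ (k : ℝ) * P := by positivity
    have hfree : ‖sys.out (sys.trans t (sys.trans (k * P) 0 w) 0)‖ ≤
        ‖sys.out‖ * (M * exp (-σ * t) * C) := by
      refine (sys.out.le_opNorm _).trans (mul_le_mul_of_nonneg_left ?_ (norm_nonneg _))
      exact (hES.2.2 _ t ht).trans (mul_le_mul_of_nonneg_left ((hC w hw _ hkP).trans (hrun _))
        (mul_nonneg hES.1.le (exp_pos _).le))
    rw [sys.trans_add hkP ht hw, funext (hper.nat_mul k), map_add, add_comm]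
    linarith [norm_sub_le_norm_add (sys.out (sys.trans t 0 w))
      (sys.out (sys.trans t (sys.trans (k * P) 0 w) 0))]
  have hbdd : IsBoundedUnder (· ≤ ·) atTop fun t => ‖sys.out (sys.trans t 0 w)‖ := by
    refine isBoundedUnder_of_eventually_le (a := ‖sys.out‖ * C) ?_
    filter_upwards [eventually_ge_atTop 0] with s hs
    exact (hC.norm_out_trans_le hs hw).trans (mul_le_mul_of_nonneg_left (hrun s) (norm_nonneg _))
  have hsamples : Tendsto (fun k : ℕ => k * P + t) atTop atTop :=
    tendsto_atTop_add_const_right _ t (tendsto_natCast_atTop_atTop.atTop_mul_const hP)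
  exact le_limsup_of_frequently_le (hsamples.frequently (Frequently.of_forall hsample)) hbdd

theorem IsES.norm_out_le_asympGain {M σ C : ℝ} (hES : sys.IsES M σ) (hsc : sys.StrictlyCausal)
    (hC : sys.HasStateGain C) (hC0 : 0 ≤ C) (hu : u ∈ sys.inputs) (hT : 0 ≤ T)
    (h1 : runSup u T = 1) : ‖sys.out (sys.trans T 0 u)‖ ≤ sys.asympGain := by
  have hpad : ∀ S > 0, ‖sys.out (sys.trans T 0 u)‖ ≤
      sys.asympGain + ‖sys.out‖ * (M * exp (-σ * (S + T)) * C) := by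
    intro S hS
    have hw := periodicPad_mem hu hS hT
    have hw1 : ∀ s, ‖periodicPad u S T s‖ ≤ 1 :=
      fun s => h1 ▸ norm_periodicPad_le (sys.loc_bdd u hu T) s
    have hsup : supNorm (periodicPad u S T) = 1 :=
      h1 ▸ supNorm_periodicPad (sys.loc_bdd u hu T) hS.le hT
    have hsample := hES.norm_out_sub_le_limsup hC hC0 hw hw1 (by linarith)
      (periodic_periodicPad u hS.le hT) (by linarith : 0 ≤ S + T)
    rw [hsc.trans_periodicPad hu hS hT] at hsample
    linarith [hC.limsup_le_asympGain hw hsup]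
  have hlim : Tendsto (fun S => sys.asympGain + ‖sys.out‖ * (M * exp (-σ * (S + T)) * C))
      atTop (𝓝 sys.asympGain) := by
    have h := (((tendsto_mul_exp_neg_mul_atTop_nhds_zero M hES.2.1).comp
      (tendsto_atTop_add_const_right _ T tendsto_id)).mul_const C).const_mul ‖sys.out‖
    simpa using h.const_add sys.asympGain
  exact ge_of_tendsto hlim ((eventually_gt_atTop 0).mono hpad)

theorem IsES.gain_eq_asympGain {M σ C : ℝ} (hES : sys.IsES M σ) (hsc : sys.StrictlyCausal)
    (hC : sys.HasStateGain C) (hC0 : 0 ≤ C) : sys.gain = sys.asympGain :=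
  le_antisymm (sys.gain_le fun _ hT _ hu h1 => hES.norm_out_le_asympGain hsc hC hC0 hu hT h1)
    hC.asympGain_le_gain

theorem HasStateGain.gain_eq_sSup_V {C : ℝ} (hC : sys.HasStateGain C) :
    sys.gain = sSup {r | ∃ T > (0 : ℝ), r = sys.V T} := by
  have hV : ∀ T ≥ (0 : ℝ), sys.V T ≤ sys.gain :=
    fun T hT => sys.V_le hT fun _ hu h1 => hC.norm_out_le_gain hT hu h1
  have hbdd : BddAbove {r | ∃ T > (0 : ℝ), r = sys.V T} :=
    ⟨sys.gain, by rintro _ ⟨T, hT, rfl⟩; exact hV T hT.le⟩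
  refine le_antisymm (sys.gain_le fun t ht u hu h1 => ?_)
    (csSup_le ⟨_, 1, one_pos, rfl⟩ (by rintro _ ⟨T, hT, rfl⟩; exact hV T hT.le))
  rcases ht.eq_or_lt with rfl | ht
  · rw [sys.identity 0 u hu, map_zero, norm_zero]
    exact (sys.V_nonneg 1).trans (le_csSup hbdd ⟨1, one_pos, rfl⟩)
  · exact (hC.norm_out_le_V ht.le hu h1).trans (le_csSup hbdd ⟨t, ht, rfl⟩)

end LinearControlSystem

open LinearControlSystem in
/-- Theorem 4.3, equation (4.6): for an ES, robust, strictly causal linear control system,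
the minimum IOS-gain, the minimum output asymptotic gain, and `sup_{T>0} V(T)` coincide. -/
theorem statement_6 {X Y U : Type*}
    [NormedAddCommGroup X] [NormedSpace ℝ X]
    [NormedAddCommGroup Y] [NormedSpace ℝ Y]
    [NormedAddCommGroup U] [NormedSpace ℝ U]
    (sys : LinearControlSystem X Y U)
    (hES : sys.ES) (hrob : sys.Robust) (hsc : sys.StrictlyCausal) :
    sys.gain = sys.asympGain ∧
    sys.gain = sSup {r | ∃ T > (0 : ℝ), r = sys.V T} := by
  obtain ⟨M, σ, hES⟩ := hES
  obtain ⟨b, hrob⟩ := hrob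
  obtain ⟨C, hC0, hC⟩ := hES.hasStateGain hrob
  exact ⟨hES.gain_eq_asympGain hsc hC hC0, hC.gain_eq_sSup_V⟩
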